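/- arXiv:math/0108088 — 2 statements merged into one kernel-verified Lean document; each statement's English description precedes it below -/
import Mathlib

section
/- Define f: ℂ³ → ℝ³ by f(z₁,z₂,z₃) = (|z₁|²−|z₃|², |z₂|²−|z₃|², Im(z₁z₂z₃)). Then for every point z ∈ ℂ³ at which the (real) derivative df_z: ℂ³ → ℝ³ is surjective, the kernel ker(df_z) is a real 3-dimensional subspace of ℂ³ on which both ω and Im Ω vanish identically, i.e. a special Lagrangian 3-plane. Hence each nonsingular level set f^{-1}(a,b,c) is a special Lagrangian 3-fold, and f is a special Lagrangian fibration of ℂ³. -/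
open scoped BigOperators ComplexConjugate

noncomputable section

/-- The Kähler form on `ℂ³`. -/
def wC (u v : Fin 3 → ℂ) : ℝ := (∑ j, conj (u j) * v j).im

/-- The holomorphic volume form `Ω = dz₁∧dz₂∧dz₃` on `ℂ³`. -/
def OmC (v : Fin 3 → (Fin 3 → ℂ)) : ℂ :=
  Matrix.det (Matrix.of fun i j => v j i)

/-- The map `f(z₁,z₂,z₃) = (|z₁|²−|z₃|², |z₂|²−|z₃|², Im(z₁z₂z₃))`. -/
def f5 (z : Fin 3 → ℂ) : Fin 3 → ℝ :=
  ![Complex.normSq (z 0) - Complex.normSq (z 2),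
    Complex.normSq (z 1) - Complex.normSq (z 2),
    (z 0 * z 1 * z 2).im]

namespace SL5

open Complex ContinuousLinearMap

/-- projection onto the `j`-th coordinate. -/
def pr (j : Fin 3) : (Fin 3 → ℂ) →L[ℝ] ℂ := ContinuousLinearMap.proj j

/-- complex conjugation as a real-linear map. -/
def conjL : ℂ →L[ℝ] ℂ := Complex.conjCLE.toContinuousLinearMap

/-- The derivative of `f5` at `z`, componentwise. -/
def Dm (z : Fin 3 → ℂ) : Fin 3 → ((Fin 3 → ℂ) →L[ℝ] ℝ) :=
  ![ Complex.reCLM.comp (conj (z 0) • pr 0 + z 0 • (conjL.comp (pr 0)))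
       - Complex.reCLM.comp (conj (z 2) • pr 2 + z 2 • (conjL.comp (pr 2))),
     Complex.reCLM.comp (conj (z 1) • pr 1 + z 1 • (conjL.comp (pr 1)))
       - Complex.reCLM.comp (conj (z 2) • pr 2 + z 2 • (conjL.comp (pr 2))),
     Complex.imCLM.comp ((z 0 * z 1) • pr 2 + z 2 • (z 0 • pr 1 + z 1 • pr 0)) ]

theorem hasD (z : Fin 3 → ℂ) : HasFDerivAt f5 (ContinuousLinearMap.pi (Dm z)) z := by
  apply hasFDerivAt_pi''
  have hx : ∀ j : Fin 3, HasFDerivAt (fun x : Fin 3 → ℂ => x j) (pr j) z :=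
    fun j => hasFDerivAt_apply j z
  have hconj : ∀ j : Fin 3, HasFDerivAt (fun x : Fin 3 → ℂ => conj (x j))
      (conjL.comp (pr j)) z := fun j => (conjL.hasFDerivAt).comp z (hx j)
  have hns : ∀ j : Fin 3, HasFDerivAt (fun x : Fin 3 → ℂ => Complex.normSq (x j))
      (Complex.reCLM.comp (conj (z j) • pr j + z j • (conjL.comp (pr j)))) z := by
    intro j
    have h : (fun x : Fin 3 → ℂ => Complex.normSq (x j))
        = fun x : Fin 3 → ℂ => Complex.reCLM (conj (x j) * x j) := by
      funext x
      simp [Complex.normSq_apply, Complex.mul_re]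
    rw [h]
    exact (Complex.reCLM.hasFDerivAt).comp z ((hconj j).mul (hx j))
  intro i
  fin_cases i
  · show HasFDerivAt (fun x => f5 x 0) ((proj (0 : Fin 3)).comp (ContinuousLinearMap.pi (Dm z))) z
    have h : (fun x : Fin 3 → ℂ => f5 x 0)
        = fun x : Fin 3 → ℂ => Complex.normSq (x 0) - Complex.normSq (x 2) := by
      funext x; simp [f5]
    rw [ContinuousLinearMap.proj_pi, h]
    exact (hns 0).sub (hns 2)
  · show HasFDerivAt (fun x => f5 x 1) ((proj (1 : Fin 3)).comp (ContinuousLinearMap.pi (Dm z))) z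
    have h : (fun x : Fin 3 → ℂ => f5 x 1)
        = fun x : Fin 3 → ℂ => Complex.normSq (x 1) - Complex.normSq (x 2) := by
      funext x; simp [f5]
    rw [ContinuousLinearMap.proj_pi, h]
    exact (hns 1).sub (hns 2)
  · show HasFDerivAt (fun x => f5 x 2) ((proj (2 : Fin 3)).comp (ContinuousLinearMap.pi (Dm z))) z
    have h : (fun x : Fin 3 → ℂ => f5 x 2)
        = fun x : Fin 3 → ℂ => Complex.imCLM (x 0 * x 1 * x 2) := by
      funext x; simp [f5]
    rw [ContinuousLinearMap.proj_pi, h]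
    exact (Complex.imCLM.hasFDerivAt).comp z (((hx 0).mul (hx 1)).mul (hx 2))

theorem fap0 (z v : Fin 3 → ℂ) :
    fderiv ℝ f5 z v 0 = 2 * (conj (z 0) * v 0).re - 2 * (conj (z 2) * v 2).re := by
  rw [(hasD z).fderiv]
  simp [Dm, pr, conjL, Complex.mul_re, Complex.conj_re, Complex.conj_im]
  ring

theorem fap1 (z v : Fin 3 → ℂ) :
    fderiv ℝ f5 z v 1 = 2 * (conj (z 1) * v 1).re - 2 * (conj (z 2) * v 2).re := by
  rw [(hasD z).fderiv]
  simp [Dm, pr, conjL, Complex.mul_re, Complex.conj_re, Complex.conj_im]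
  ring

theorem fap2 (z v : Fin 3 → ℂ) :
    fderiv ℝ f5 z v 2 = (v 0 * z 1 * z 2 + z 0 * v 1 * z 2 + z 0 * z 1 * v 2).im := by
  rw [(hasD z).fderiv]
  simp [Dm, pr, conjL, Complex.mul_im, Complex.mul_re]
  ring

def e0 (z : Fin 3 → ℂ) : Fin 3 → ℂ := ![(-2 * I) * z 0, 0, (2 * I) * z 2]
def e1 (z : Fin 3 → ℂ) : Fin 3 → ℂ := ![0, (-2 * I) * z 1, (2 * I) * z 2]
def e2 (z : Fin 3 → ℂ) : Fin 3 → ℂ :=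
  ![conj (z 1 * z 2), conj (z 0 * z 2), conj (z 0 * z 1)]

theorem mem_ker_iff (z u : Fin 3 → ℂ) :
    u ∈ LinearMap.ker (fderiv ℝ f5 z : (Fin 3 → ℂ) →ₗ[ℝ] (Fin 3 → ℝ)) ↔
      2 * (conj (z 0) * u 0).re - 2 * (conj (z 2) * u 2).re = 0 ∧
      2 * (conj (z 1) * u 1).re - 2 * (conj (z 2) * u 2).re = 0 ∧
      (u 0 * z 1 * z 2 + z 0 * u 1 * z 2 + z 0 * z 1 * u 2).im = 0 := by
  constructor
  · intro h
    have h0 : fderiv ℝ f5 z u = 0 := LinearMap.mem_ker.mp h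
    have h' : ∀ i, fderiv ℝ f5 z u i = 0 := fun i => by rw [h0]; rfl
    exact ⟨by rw [← fap0]; exact h' 0, by rw [← fap1]; exact h' 1,
           by rw [← fap2]; exact h' 2⟩
  · rintro ⟨h0, h1, h2⟩
    have : fderiv ℝ f5 z u = 0 := by
      funext i
      fin_cases i
      · show fderiv ℝ f5 z u 0 = 0; rw [fap0]; exact h0
      · show fderiv ℝ f5 z u 1 = 0; rw [fap1]; exact h1
      · show fderiv ℝ f5 z u 2 = 0; rw [fap2]; exact h2
    exact LinearMap.mem_ker.mpr this

theorem he0 (z : Fin 3 → ℂ) : e0 z ∈ LinearMap.ker (fderiv ℝ f5 z : (Fin 3 → ℂ) →ₗ[ℝ] (Fin 3 → ℝ)) := by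
  rw [mem_ker_iff]
  refine ⟨?_, ?_, ?_⟩ <;>
    simp [e0, Complex.mul_re, Complex.mul_im, Complex.conj_re, Complex.conj_im] <;> ring

theorem he1 (z : Fin 3 → ℂ) : e1 z ∈ LinearMap.ker (fderiv ℝ f5 z : (Fin 3 → ℂ) →ₗ[ℝ] (Fin 3 → ℝ)) := by
  rw [mem_ker_iff]
  refine ⟨?_, ?_, ?_⟩ <;>
    simp [e1, Complex.mul_re, Complex.mul_im, Complex.conj_re, Complex.conj_im] <;> ring

theorem he2 (z : Fin 3 → ℂ) : e2 z ∈ LinearMap.ker (fderiv ℝ f5 z : (Fin 3 → ℂ) →ₗ[ℝ] (Fin 3 → ℝ)) := by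
  rw [mem_ker_iff]
  refine ⟨?_, ?_, ?_⟩ <;>
    simp [e2, Complex.mul_re, Complex.mul_im, Complex.conj_re, Complex.conj_im] <;> ring

theorem indep (z : Fin 3 → ℂ) (hsurj : Function.Surjective (fderiv ℝ f5 z)) :
    LinearIndependent ℝ ![e0 z, e1 z, e2 z] := by
  rw [Fintype.linearIndependent_iff]
  intro g hg
  have hsum : g 0 • e0 z + g 1 • e1 z + g 2 • e2 z = 0 := by
    simpa [Fin.sum_univ_three] using hg
  set a := g 0 with ha'
  set b := g 1 with hb'
  set c := g 2 with hc'
  have c0 : (a : ℂ) * (-2 * I * z 0) + (c : ℂ) * conj (z 1 * z 2) = 0 := by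
    have := congrFun hsum 0
    simpa [e0, e1, e2, Complex.real_smul] using this
  have c1 : (b : ℂ) * (-2 * I * z 1) + (c : ℂ) * conj (z 0 * z 2) = 0 := by
    have := congrFun hsum 1
    simpa [e0, e1, e2, Complex.real_smul] using this
  have c2 : (a : ℂ) * (2 * I * z 2) + (b : ℂ) * (2 * I * z 2)
      + (c : ℂ) * conj (z 0 * z 1) = 0 := by
    have := congrFun hsum 2
    simpa [e0, e1, e2, Complex.real_smul, add_assoc] using this
  have hall : ∀ v : Fin 3 → ℂ,
      a * fderiv ℝ f5 z v 0 + b * fderiv ℝ f5 z v 1 + c * fderiv ℝ f5 z v 2 = 0 := by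
    intro v
    rw [fap0, fap1, fap2]
    have key : a * (2 * (conj (z 0) * v 0).re - 2 * (conj (z 2) * v 2).re)
        + b * (2 * (conj (z 1) * v 1).re - 2 * (conj (z 2) * v 2).re)
        + c * ((v 0 * z 1 * z 2 + z 0 * v 1 * z 2 + z 0 * z 1 * v 2).im)
        = (conj ((a : ℂ) * (-2 * I * z 0) + (c : ℂ) * conj (z 1 * z 2)) * v 0
           + conj ((b : ℂ) * (-2 * I * z 1) + (c : ℂ) * conj (z 0 * z 2)) * v 1
           + conj ((a : ℂ) * (2 * I * z 2) + (b : ℂ) * (2 * I * z 2)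
               + (c : ℂ) * conj (z 0 * z 1)) * v 2).im := by
      simp [Complex.mul_re, Complex.mul_im, Complex.add_re, Complex.add_im,
        Complex.conj_re, Complex.conj_im]
      ring
    rw [key, c0, c1, c2]
    simp
  obtain ⟨v, hv⟩ := hsurj ![a, b, c]
  have h := hall v
  rw [show fderiv ℝ f5 z v 0 = a from by rw [hv]; rfl,
      show fderiv ℝ f5 z v 1 = b from by rw [hv]; rfl,
      show fderiv ℝ f5 z v 2 = c from by rw [hv]; rfl] at h
  have ha : a = 0 := by nlinarith [sq_nonneg a, sq_nonneg b, sq_nonneg c]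
  have hb : b = 0 := by nlinarith [sq_nonneg a, sq_nonneg b, sq_nonneg c]
  have hc : c = 0 := by nlinarith [sq_nonneg a, sq_nonneg b, sq_nonneg c]
  intro i
  fin_cases i
  · exact ha
  · exact hb
  · exact hc

theorem finrank_ker (z : Fin 3 → ℂ) (hsurj : Function.Surjective (fderiv ℝ f5 z)) :
    Module.finrank ℝ (LinearMap.ker (fderiv ℝ f5 z : (Fin 3 → ℂ) →ₗ[ℝ] (Fin 3 → ℝ))) = 3 := by
  have h6 : Module.finrank ℝ (Fin 3 → ℂ) = 6 := by
    simp [Module.finrank_pi_fintype, Complex.finrank_real_complex]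
  have hr : LinearMap.range ((fderiv ℝ f5 z) : (Fin 3 → ℂ) →ₗ[ℝ] (Fin 3 → ℝ)) = ⊤ :=
    LinearMap.range_eq_top.mpr hsurj
  have h2 := LinearMap.finrank_range_add_finrank_ker
    ((fderiv ℝ f5 z) : (Fin 3 → ℂ) →ₗ[ℝ] (Fin 3 → ℝ))
  rw [hr, h6] at h2
  have h3 : Module.finrank ℝ (⊤ : Submodule ℝ (Fin 3 → ℝ)) = 3 := by
    simp [finrank_top]
  rw [h3] at h2
  have h4 : Module.finrank ℝ
      (LinearMap.ker ((fderiv ℝ f5 z) : (Fin 3 → ℂ) →ₗ[ℝ] (Fin 3 → ℝ))) = 3 := by omega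
  exact h4

theorem ker_eq (z : Fin 3 → ℂ) (hsurj : Function.Surjective (fderiv ℝ f5 z)) :
    LinearMap.ker (fderiv ℝ f5 z : (Fin 3 → ℂ) →ₗ[ℝ] (Fin 3 → ℝ))
      = Submodule.span ℝ (Set.range ![e0 z, e1 z, e2 z]) := by
  have hle : Submodule.span ℝ (Set.range ![e0 z, e1 z, e2 z])
      ≤ LinearMap.ker (fderiv ℝ f5 z : (Fin 3 → ℂ) →ₗ[ℝ] (Fin 3 → ℝ)) := by
    rw [Submodule.span_le]
    rintro x ⟨i, rfl⟩
    fin_cases i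
    · exact he0 z
    · exact he1 z
    · exact he2 z
  have hsp : Module.finrank ℝ
      (Submodule.span ℝ (Set.range ![e0 z, e1 z, e2 z])) = 3 := by
    rw [finrank_span_eq_card (indep z hsurj)]
    simp
  exact (Submodule.eq_of_le_of_finrank_le hle
    (by rw [finrank_ker z hsurj, hsp])).symm

theorem exists_rep (z : Fin 3 → ℂ) (hsurj : Function.Surjective (fderiv ℝ f5 z))
    (u : Fin 3 → ℂ) (hu : u ∈ LinearMap.ker (fderiv ℝ f5 z : (Fin 3 → ℂ) →ₗ[ℝ] (Fin 3 → ℝ))) :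
    ∃ c : Fin 3 → ℝ, c 0 • e0 z + c 1 • e1 z + c 2 • e2 z = u := by
  rw [ker_eq z hsurj, Submodule.mem_span_range_iff_exists_fun] at hu
  obtain ⟨c, hc⟩ := hu
  exact ⟨c, by simpa [Fin.sum_univ_three] using hc⟩

end SL5

/-- At every point `z` where the real derivative of `f` is surjective, the kernel
of `df_z` is a real `3`-dimensional subspace of `ℂ³` on which `ω` and `Im Ω`
vanish identically, i.e. a special Lagrangian `3`-plane.  Hence the nonsingular
level sets of `f` are special Lagrangian `3`-folds and `f` is a special
Lagrangian fibration of `ℂ³`. -/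
theorem stmt5 (z : Fin 3 → ℂ)
    (hsurj : Function.Surjective (fderiv ℝ f5 z)) :
    Module.finrank ℝ (LinearMap.ker (fderiv ℝ f5 z : (Fin 3 → ℂ) →ₗ[ℝ] (Fin 3 → ℝ))) = 3 ∧
    (∀ u ∈ LinearMap.ker (fderiv ℝ f5 z : (Fin 3 → ℂ) →ₗ[ℝ] (Fin 3 → ℝ)),
      ∀ v ∈ LinearMap.ker (fderiv ℝ f5 z : (Fin 3 → ℂ) →ₗ[ℝ] (Fin 3 → ℝ)),
      wC u v = 0) ∧
    (∀ u ∈ LinearMap.ker (fderiv ℝ f5 z : (Fin 3 → ℂ) →ₗ[ℝ] (Fin 3 → ℝ)),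
      ∀ v ∈ LinearMap.ker (fderiv ℝ f5 z : (Fin 3 → ℂ) →ₗ[ℝ] (Fin 3 → ℝ)),
      ∀ w ∈ LinearMap.ker (fderiv ℝ f5 z : (Fin 3 → ℂ) →ₗ[ℝ] (Fin 3 → ℝ)), (OmC ![u, v, w]).im = 0) := by
  open SL5 Complex in
  refine ⟨finrank_ker z hsurj, ?_, ?_⟩
  · intro u hu v hv
    obtain ⟨cu, hcu⟩ := exists_rep z hsurj u hu
    obtain ⟨h0, h1, h2⟩ := (mem_ker_iff z v).mp hv
    rw [← hcu]
    simp only [wC, Fin.sum_univ_three, Pi.add_apply, Pi.smul_apply, Complex.real_smul,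
      e0, e1, e2, Matrix.cons_val_zero, Matrix.cons_val_one, Matrix.head_cons,
      Matrix.cons_val_two, Matrix.tail_cons, map_add, map_mul, Complex.conj_ofReal,
      Complex.conj_conj]
    simp only [Complex.add_im, Complex.add_re, Complex.mul_im, Complex.mul_re,
      Complex.conj_re, Complex.conj_im, Complex.I_re, Complex.I_im,
      Complex.ofReal_re, Complex.ofReal_im, Complex.neg_re, Complex.neg_im,
      Complex.re_ofNat, Complex.im_ofNat, Complex.zero_re, Complex.zero_im] at h0 h1 h2 ⊢
    ring_nf at h0 h1 h2 ⊢
    linear_combination cu 0 * h0 + cu 1 * h1 + cu 2 * h2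
  · intro u hu v hv w hw
    obtain ⟨cu, hcu⟩ := exists_rep z hsurj u hu
    obtain ⟨cv, hcv⟩ := exists_rep z hsurj v hv
    obtain ⟨cw, hcw⟩ := exists_rep z hsurj w hw
    set A : Matrix (Fin 3) (Fin 3) ℝ := Matrix.of ![cu, cv, cw] with hA
    set E : Matrix (Fin 3) (Fin 3) ℂ := Matrix.of ![e0 z, e1 z, e2 z] with hE
    have hM : Matrix.of (fun i j => (![u, v, w] : Fin 3 → Fin 3 → ℂ) j i)
        = Matrix.transpose ((A.map (Complex.ofRealHom)) * E) := by
      ext i j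
      fin_cases i <;> fin_cases j <;>
        simp [A, E, Matrix.mul_apply, Fin.sum_univ_three, ← hcu, ← hcv, ← hcw,
          e0, e1, e2, Complex.real_smul]
    rw [OmC, hM, Matrix.det_transpose, Matrix.det_mul, ← RingHom.mapMatrix_apply, ← RingHom.map_det]
    have hEdet : (E.det).im = 0 := by
      rw [Matrix.det_fin_three]
      simp [E, e0, e1, e2, Complex.mul_im, Complex.mul_re,
        Complex.conj_re, Complex.conj_im, Complex.I_re, Complex.I_im]
      ring
    simp [Complex.mul_im, hEdet]
end
end

section
/- Let t ≥ 0 and define ψ: ℝ × ℂ → ℂ³ by ψ(θ, z) = ((|z|² + t²)^{1/2} e^{iθ}, z, e^{−iθ} conj(z)). Then at every point p = (θ,z) of the domain (with z ≠ 0 required in the case t = 0, so that ψ is differentiable at p), and for all tangent vectors u, v, w ∈ ℝ × ℂ ≅ ℝ³: ω(Dψ_p(u), Dψ_p(v)) = 0 and Im Ω(Dψ_p(u), Dψ_p(v), Dψ_p(w)) = 0, where Dψ_p is the (real) derivative of ψ at p. Hence the 3-folds L_t of Example 8.1, and in particular the T²-cone L₀ for t = 0, are special Lagrangian in ℂ³.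 -/
open scoped BigOperators ComplexConjugate

noncomputable section

/-- The parametrisation `ψ(θ,z) = ((|z|²+t²)^{1/2} e^{iθ}, z, e^{−iθ} conj z)` of the
Harvey–Lawson examples `L_t`. -/
def psi10 (t : ℝ) (p : ℝ × ℂ) : Fin 3 → ℂ :=
  ![(Real.sqrt (Complex.normSq p.2 + t ^ 2) : ℂ) * Complex.exp ((p.1 : ℂ) * Complex.I),
    p.2,
    Complex.exp (-(p.1 : ℂ) * Complex.I) * conj p.2]

set_option maxHeartbeats 1600000 in
/-- At every point `p = (θ,z)` of the domain (requiring `z ≠ 0` when `t = 0`, so that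
`ψ` is differentiable at `p`), `ω` and `Im Ω` vanish on the image of the real
derivative of `ψ`.  Hence the `3`-folds `L_t`, in particular the `T²`-cone `L₀`,
are special Lagrangian in `ℂ³`. -/
theorem stmt10 (t : ℝ) (ht : 0 ≤ t) (p : ℝ × ℂ) (hp : t = 0 → p.2 ≠ 0)
    (u v w : ℝ × ℂ) :
    wC (fderiv ℝ (psi10 t) p u) (fderiv ℝ (psi10 t) p v) = 0 ∧
    (OmC ![fderiv ℝ (psi10 t) p u, fderiv ℝ (psi10 t) p v,
      fderiv ℝ (psi10 t) p w]).im = 0 := by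
  have hr : 0 < Complex.normSq p.2 + t ^ 2 := by
    rcases eq_or_lt_of_le ht with h | h
    · simpa [← h] using Complex.normSq_pos.2 (hp h.symm)
    · exact add_pos_of_nonneg_of_pos (Complex.normSq_nonneg _) (by positivity)
  have hne : p.2.re * p.2.re + p.2.im * p.2.im + t ^ 2 ≠ 0 := by
    rw [← Complex.normSq_apply]; exact hr.ne'
  have harg : p.2.re * p.2.re + p.2.im * p.2.im + t ^ 2 = Complex.normSq p.2 + t ^ 2 := by
    rw [Complex.normSq_apply]
  have hRpos : 0 < Real.sqrt (Complex.normSq p.2 + t ^ 2) := Real.sqrt_pos.2 hr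
  have hRne : (Real.sqrt (Complex.normSq p.2 + t ^ 2) : ℂ) ≠ 0 :=
    Complex.ofReal_ne_zero.2 hRpos.ne'
  -- basic derivatives
  have hre : HasFDerivAt (fun x : ℝ × ℂ => x.2.re)
      (Complex.reCLM.comp (ContinuousLinearMap.snd ℝ ℝ ℂ)) p :=
    (Complex.reCLM.comp (ContinuousLinearMap.snd ℝ ℝ ℂ)).hasFDerivAt
  have him : HasFDerivAt (fun x : ℝ × ℂ => x.2.im)
      (Complex.imCLM.comp (ContinuousLinearMap.snd ℝ ℝ ℂ)) p :=
    (Complex.imCLM.comp (ContinuousLinearMap.snd ℝ ℝ ℂ)).hasFDerivAt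
  have hx1 : HasFDerivAt (fun x : ℝ × ℂ => (x.1 : ℂ))
      (Complex.ofRealCLM.comp (ContinuousLinearMap.fst ℝ ℝ ℂ)) p :=
    (Complex.ofRealCLM.comp (ContinuousLinearMap.fst ℝ ℝ ℂ)).hasFDerivAt
  -- first component
  have hsq := ((hre.mul hre).add (him.mul him)).add_const (t ^ 2)
  have hsqrt := (Real.hasDerivAt_sqrt hne).comp_hasFDerivAt p hsq
  have hofr := HasFDerivAt.comp (𝕜 := ℝ) p Complex.ofRealCLM.hasFDerivAt hsqrt
  have hexp := (hx1.mul_const Complex.I).cexp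
  have h1 := hofr.mul hexp
  have h1' := h1.congr_of_eventuallyEq (f₁ := fun x : ℝ × ℂ => psi10 t x 0)
    (Filter.Eventually.of_forall fun x => by
      simp [psi10, Function.comp, Complex.normSq_apply])
  -- second component
  have h2 := (ContinuousLinearMap.snd ℝ ℝ ℂ).hasFDerivAt (x := p)
  have h2' := h2.congr_of_eventuallyEq (f₁ := fun x : ℝ × ℂ => psi10 t x 1)
    (Filter.Eventually.of_forall fun x => by simp [psi10])
  -- third component
  have hexp3 := ((hx1.neg).mul_const Complex.I).cexp
  have hconj := (Complex.conjCLE.toContinuousLinearMap.comp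
    (ContinuousLinearMap.snd ℝ ℝ ℂ)).hasFDerivAt (x := p)
  have h3 := hexp3.mul hconj
  have h3' := h3.congr_of_eventuallyEq (f₁ := fun x : ℝ × ℂ => psi10 t x 2)
    (Filter.Eventually.of_forall fun x => by
      simp [psi10, Complex.conjCLE_apply])
  -- differentiability of the full map
  have hdiff : DifferentiableAt ℝ (psi10 t) p := by
    refine differentiableAt_pi.2 fun i => ?_
    fin_cases i
    exacts [h1'.differentiableAt, h2'.differentiableAt, h3'.differentiableAt]
  have hD := hdiff.hasFDerivAt
  have key0 := (hasFDerivAt_pi'.1 hD 0).unique h1'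
  have key1 := (hasFDerivAt_pi'.1 hD 1).unique h2'
  have key2 := (hasFDerivAt_pi'.1 hD 2).unique h3'
  have E0 : ∀ q : ℝ × ℂ, fderiv ℝ (psi10 t) p q 0 =
      Complex.I * (Real.sqrt (Complex.normSq p.2 + t ^ 2) : ℂ) *
        Complex.exp ((p.1 : ℂ) * Complex.I) * (q.1 : ℂ) +
      (((p.2.re * q.2.re + p.2.im * q.2.im) / Real.sqrt (Complex.normSq p.2 + t ^ 2) : ℝ) : ℂ) *
        Complex.exp ((p.1 : ℂ) * Complex.I) := by
    intro q
    have hq := DFunLike.congr_fun key0 q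
    simp only [ContinuousLinearMap.coe_comp', Function.comp_apply,
      ContinuousLinearMap.proj_apply, ContinuousLinearMap.add_apply,
      ContinuousLinearMap.coe_smul', Pi.smul_apply, ContinuousLinearMap.coe_fst',
      ContinuousLinearMap.coe_snd', Complex.ofRealCLM_apply, Complex.reCLM_apply,
      Complex.imCLM_apply, smul_eq_mul, Pi.add_apply, Pi.mul_apply, harg] at hq
    rw [hq]
    push_cast
    field_simp
    ring
  have E1 : ∀ q : ℝ × ℂ, fderiv ℝ (psi10 t) p q 1 = q.2 := by
    intro q
    have hq := DFunLike.congr_fun key1 q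
    simpa using hq
  have E2 : ∀ q : ℝ × ℂ, fderiv ℝ (psi10 t) p q 2 =
      -Complex.I * conj p.2 * Complex.exp (-(p.1 : ℂ) * Complex.I) * (q.1 : ℂ) +
      Complex.exp (-(p.1 : ℂ) * Complex.I) * conj q.2 := by
    intro q
    have hq := DFunLike.congr_fun key2 q
    simp only [ContinuousLinearMap.coe_comp', Function.comp_apply,
      ContinuousLinearMap.proj_apply, ContinuousLinearMap.add_apply,
      ContinuousLinearMap.coe_smul', Pi.smul_apply, ContinuousLinearMap.coe_fst',
      ContinuousLinearMap.coe_snd', Complex.ofRealCLM_apply,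
      ContinuousLinearMap.neg_apply, ContinuousLinearEquiv.coe_coe,
      Complex.conjCLE_apply, smul_eq_mul, Pi.neg_apply] at hq
    rw [hq]
    ring
  have hq1 : (Real.sqrt (Complex.normSq p.2 + t ^ 2))⁻¹ *
      Real.sqrt (Complex.normSq p.2 + t ^ 2) = 1 := inv_mul_cancel₀ hRpos.ne'
  have hcs : Real.cos p.1 ^ 2 + Real.sin p.1 ^ 2 = 1 := Real.cos_sq_add_sin_sq p.1
  have hmi : (-(p.1 : ℂ) * Complex.I) = ((-p.1 : ℝ) : ℂ) * Complex.I := by push_cast; ring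
  constructor
  · simp only [wC, Fin.sum_univ_three, E0, E1, E2, hmi]
    simp only [Complex.add_im, Complex.add_re, Complex.mul_im, Complex.mul_re,
      Complex.neg_re, Complex.neg_im, Complex.I_re, Complex.I_im,
      Complex.ofReal_re, Complex.ofReal_im, Complex.conj_re, Complex.conj_im,
      Complex.exp_ofReal_mul_I_re, Complex.exp_ofReal_mul_I_im,
      Real.cos_neg, Real.sin_neg]
    simp only [div_eq_mul_inv]
    linear_combination
      ((u.2.im * v.1 * p.2.im + u.2.re * v.1 * p.2.re - u.1 * v.2.im * p.2.im
        - u.1 * v.2.re * p.2.re) * (Real.sin p.1 ^ 2 + Real.cos p.1 ^ 2)) * hq1 +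
      (u.2.im * v.2.re - u.2.re * v.2.im) * hcs
  · simp only [OmC, Matrix.det_fin_three, Matrix.of_apply, Matrix.cons_val_zero,
      Matrix.cons_val_one, Matrix.head_cons, Matrix.cons_val_two, Matrix.tail_cons,
      Matrix.head_fin_const]
    simp only [E0, E1, E2, hmi]
    simp only [Complex.add_im, Complex.add_re, Complex.mul_im, Complex.mul_re,
      Complex.sub_im, Complex.sub_re,
      Complex.neg_re, Complex.neg_im, Complex.I_re, Complex.I_im,
      Complex.ofReal_re, Complex.ofReal_im, Complex.conj_re, Complex.conj_im,
      Complex.exp_ofReal_mul_I_re, Complex.exp_ofReal_mul_I_im,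
      Real.cos_neg, Real.sin_neg]
    simp only [div_eq_mul_inv]
    ring
end
end
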